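/- Define c(n) = 0 if n ≡ 0 (mod 4), c(n) = 1 if n ≡ 1 (mod 4), and c(n) = 2 if n ≡ 2 or 3 (mod 4). Then for all n ≥ 1, the independence number of G_n satisfies α(G_n) ≥ 4n − 4c(n). -/

import Mathlib

/-- The vertex set of the graph `G_n`: vectors in `{-1,0,1}^n` with exactly three
nonzero coordinates. -/
def Gvert (n : ℕ) : Type :=
  {v : Fin n → ℤ // (∀ i, v i = -1 ∨ v i = 0 ∨ v i = 1) ∧
    (Finset.univ.filter (fun i => v i ≠ 0)).card = 3}

/-- The graph `G_n`: two such vectors are adjacent iff their scalar product is `1`. -/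
def G (n : ℕ) : SimpleGraph (Gvert n) where
  Adj u v := u ≠ v ∧ ∑ i, u.1 i * v.1 i = 1
  symm := ⟨by
    rintro u v ⟨h1, h2⟩
    exact ⟨h1.symm, (Finset.sum_congr rfl fun i _ => mul_comm _ _).trans h2⟩⟩
  loopless := ⟨by rintro u ⟨h1, -⟩; exact h1 rfl⟩

/-- A set of vertices is independent if no two of its members are adjacent. -/
def IsIndep {V : Type*} (H : SimpleGraph V) (s : Set V) : Prop :=
  s.Pairwise fun u v => ¬ H.Adj u v

/-- The constant `c(n)` from the paper. -/
def c (n : ℕ) : ℕ := if n % 4 = 0 then 0 else if n % 4 = 1 then 1 else 2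

/-!
Split the coordinates into blocks of four and, inside each block, take the sixteen vectors
whose three nonzero entries multiply to `1`. Two of them share at least two coordinates of
their supports, so their scalar product is odd only when the supports coincide; it is then
`3 - 2d` with `d` the (even) number of sign disagreements, hence `3` or `-1`. Vectors from
different blocks are orthogonal. A leftover block of three coordinates carries the four vectors
of `{±1}³` with product `1`, and counting gives `4n - 4c(n)`.
-/

open Finset

section Append

variable {m k : ℕ} {α : Type*}

theorem Fin.append_inj {u u' : Fin m → α} {v v' : Fin k → α}
    (h : Fin.append u v = Fin.append u' v') : u = u' ∧ v = v' :=
  Prod.ext_iff.1 <| (Fin.appendEquiv m k).injective (a₁ := (u, v)) (a₂ := (u', v')) h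

theorem card_filter_append_ne_zero [Zero α] [DecidableEq α] (u : Fin m → α) (v : Fin k → α) :
    #{i | Fin.append u v i ≠ 0} = #{i | u i ≠ 0} + #{j | v j ≠ 0} := by
  simp only [card_filter, Fin.sum_univ_add, Fin.append_left, Fin.append_right]

theorem append_dotProduct_append [Mul α] [AddCommMonoid α] (u u' : Fin m → α)
    (v v' : Fin k → α) : Fin.append u v ⬝ᵥ Fin.append u' v' = u ⬝ᵥ u' + v ⬝ᵥ v' := by
  simp only [dotProduct, Fin.sum_univ_add, Fin.append_left, Fin.append_right]

end Append

section Families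

variable {m k n : ℕ}

-- `Gvert n` is definitionally `{v // IsVertex v}`.
def IsVertex (v : Fin n → ℤ) : Prop :=
  (∀ i, v i = -1 ∨ v i = 0 ∨ v i = 1) ∧ #{i | v i ≠ 0} = 3

theorem IsVertex.ne_zero {v : Fin n → ℤ} (hv : IsVertex v) : v ≠ 0 := by
  rintro rfl
  simpa using hv.2

theorem IsVertex.append_zero {u : Fin m → ℤ} (hu : IsVertex u) :
    IsVertex (Fin.append u (0 : Fin k → ℤ)) := by
  refine ⟨(Fin.forall_fin_add _).2 ⟨fun i => ?_, fun j => ?_⟩, ?_⟩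
  · simpa using hu.1 i
  · simp
  · simp [card_filter_append_ne_zero, hu.2]

theorem IsVertex.zero_append {v : Fin k → ℤ} (hv : IsVertex v) :
    IsVertex (Fin.append (0 : Fin m → ℤ) v) := by
  refine ⟨(Fin.forall_fin_add _).2 ⟨fun i => ?_, fun j => ?_⟩, ?_⟩
  · simp
  · simpa using hv.1 j
  · simp [card_filter_append_ne_zero, hv.2]

def IsIndepFamily (A : Finset (Fin n → ℤ)) : Prop :=
  (∀ v ∈ A, IsVertex v) ∧ ∀ u ∈ A, ∀ v ∈ A, u ⬝ᵥ v ≠ 1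

namespace IsIndepFamily

theorem empty : IsIndepFamily (∅ : Finset (Fin n → ℤ)) := by simp [IsIndepFamily]

theorem exists_isIndep_card_eq {A : Finset (Fin n → ℤ)} (hA : IsIndepFamily A) :
    ∃ S : Finset (Gvert n), IsIndep (G n) ↑S ∧ S.card = A.card := by
  let toVertex : A ↪ Gvert n := ⟨fun v => ⟨v.1, hA.1 v.1 v.2⟩, fun v w h =>
    Subtype.ext (congrArg Subtype.val h :)⟩
  refine ⟨A.attach.map toVertex, ?_, by simp⟩
  intro _ hu _ hv _ huv
  obtain ⟨⟨u, huA⟩, -, rfl⟩ := mem_map.1 hu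
  obtain ⟨⟨v, hvA⟩, -, rfl⟩ := mem_map.1 hv
  exact hA.2 u huA v hvA huv.2

variable {A : Finset (Fin m → ℤ)} {B : Finset (Fin k → ℤ)}

theorem append (hA : IsIndepFamily A) (hB : IsIndepFamily B) :
    IsIndepFamily (A.image (Fin.append · 0) ∪ B.image (Fin.append 0)) := by
  refine ⟨?_, ?_⟩
  · simp only [mem_union, mem_image]
    rintro _ (⟨u, hu, rfl⟩ | ⟨v, hv, rfl⟩)
    · exact (hA.1 u hu).append_zero
    · exact (hB.1 v hv).zero_append
  · simp only [mem_union, mem_image]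
    rintro _ (⟨u, hu, rfl⟩ | ⟨v, hv, rfl⟩) _ (⟨u', hu', rfl⟩ | ⟨v', hv', rfl⟩) <;>
      simp only [append_dotProduct_append, dotProduct_zero, zero_dotProduct, add_zero, zero_add]
    · exact hA.2 u hu u' hu'
    · exact zero_ne_one
    · exact zero_ne_one
    · exact hB.2 v hv v' hv'

theorem card_append (hA : IsIndepFamily A) :
    (A.image (Fin.append · 0) ∪ B.image (Fin.append 0)).card = A.card + B.card := by
  rw [card_union_of_disjoint, card_image_of_injective, card_image_of_injective]
  · exact fun v v' h => (Fin.append_inj h).2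
  · exact fun u u' h => (Fin.append_inj h).1
  · simp only [disjoint_left, mem_image, not_exists, not_and]
    rintro _ ⟨u, hu, rfl⟩ v - h
    exact (hA.1 u hu).ne_zero (Fin.append_inj h.symm).1

end IsIndepFamily

end Families

def triFamily : Finset (Fin 3 → ℤ) := {![1, 1, 1], ![1, -1, -1], ![-1, 1, -1], ![-1, -1, 1]}

def quadFamily : Finset (Fin 4 → ℤ) :=
  (univ ×ˢ triFamily).image fun p => Fin.insertNth p.1 0 p.2

theorem isIndepFamily_triFamily : IsIndepFamily triFamily := by
  unfold IsIndepFamily IsVertex; decide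

theorem isIndepFamily_quadFamily : IsIndepFamily quadFamily := by
  unfold IsIndepFamily IsVertex; decide

theorem card_triFamily : triFamily.card = 4 := by decide

theorem card_quadFamily : quadFamily.card = 16 := by decide

theorem c_add_four (n : ℕ) : c (n + 4) = c n := by simp [c]

theorem c_le_two (n : ℕ) : c n ≤ 2 := by unfold c; split_ifs <;> omega

theorem exists_isIndepFamily_card_ge : ∀ n : ℕ,
    ∃ A : Finset (Fin n → ℤ), IsIndepFamily A ∧ 4 * n - 4 * c n ≤ A.card
  | 0 | 1 | 2 => ⟨∅, .empty, by decide⟩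
  | 3 => ⟨triFamily, isIndepFamily_triFamily, by rw [card_triFamily]; decide⟩
  | n + 4 => by
    obtain ⟨A, hA, hcard⟩ := exists_isIndepFamily_card_ge n
    refine ⟨_, hA.append isIndepFamily_quadFamily, ?_⟩
    rw [hA.card_append, card_quadFamily, c_add_four]
    have := c_le_two n
    omega

theorem alpha_ge_quads_general (n : ℕ) :
    ∃ S : Finset (Gvert n), IsIndep (G n) ↑S ∧ 4 * n - 4 * c n ≤ S.card := by
  obtain ⟨A, hA, hcard⟩ := exists_isIndepFamily_card_ge n
  obtain ⟨S, hS, hSA⟩ := hA.exists_isIndep_card_eq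
  exact ⟨S, hS, hSA ▸ hcard⟩

/-- For all `n ≥ 1`, the independence number of `G_n` is at least `4n - 4c(n)`. -/
theorem alpha_ge_quads (n : ℕ) (hn : 1 ≤ n) :
    ∃ S : Finset (Gvert n), IsIndep (G n) ↑S ∧ 4 * n - 4 * c n ≤ S.card :=
  alpha_ge_quads_general n
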